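/- arXiv:1803.03880 — 2 statements merged into one kernel-verified Lean document; each statement's English description precedes it below -/
import Mathlib

section
/- With a sparsifying front end selecting support S(x) (assumed stable under perturbation, high SNR), the defended binary classifier's decision on x+e agrees with that on x whenever |wᵀ(Ψ H_S Ψᵀ x) − b| > ε‖P_{S(x)} w‖₁, where P_{S(x)} is the projection onto span{ψ_k : k ∈ S(x)}. In particular, if ‖P_{S(x)}w‖₁ < ‖w‖₁, the certified robustness radius strictly increases. -/
/-!
Since the support `S` does not move under the perturbation, the front end
`F z = Ψ H_S Ψᵀ z` is linear and symmetric, so `wᵀ F (x + e) = wᵀ F x + eᵀ (P_S w)`.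
By Hölder, `|eᵀ (P_S w)| ≤ ‖e‖_∞ ‖P_S w‖₁ ≤ ε ‖P_S w‖₁`, and a perturbation smaller in
absolute value than the margin cannot flip its sign.
-/

open Finset Matrix

theorem Real.sign_add_of_abs_lt {a δ : ℝ} (h : |δ| < |a|) :
    Real.sign (a + δ) = Real.sign a := by
  obtain ⟨hδl, hδr⟩ := abs_lt.mp h
  rcases lt_trichotomy a 0 with ha | rfl | ha
  · rw [abs_of_neg ha] at hδl hδr
    rw [Real.sign_of_neg ha, Real.sign_of_neg (by linarith)]
  · exact absurd h (by simp)
  · rw [abs_of_pos ha] at hδl hδr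
    rw [Real.sign_of_pos ha, Real.sign_of_pos (by linarith)]

theorem abs_sum_mul_le_of_abs_le {ι : Type*} [Fintype ι] {e : ι → ℝ} {ε : ℝ}
    (he : ∀ i, |e i| ≤ ε) (v : ι → ℝ) :
    |∑ i, e i * v i| ≤ ε * ∑ i, |v i| :=
  calc |∑ i, e i * v i| ≤ ∑ i, |e i| * |v i| := by
        simpa only [abs_mul] using abs_sum_le_sum_abs (fun i => e i * v i) univ
    _ ≤ ∑ i, ε * |v i| := by gcongr with i; exact he i
    _ = ε * ∑ i, |v i| := (mul_sum _ _ _).symm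

section SparseFrontEnd

variable {ι κ : Type*} [Fintype ι] (Ψ : Matrix ι κ ℝ) (S : Finset κ)

/-- `Ψ H_S Ψᵀ`: analysis by `Ψᵀ`, keeping the coefficients on `S`, synthesis by `Ψ`. -/
def sparseFrontEnd (z : ι → ℝ) : ι → ℝ :=
  fun i => ∑ k ∈ S, Ψ i k * ∑ m, Ψ m k * z m

theorem sparseFrontEnd_add (x y : ι → ℝ) :
    sparseFrontEnd Ψ S (x + y) = sparseFrontEnd Ψ S x + sparseFrontEnd Ψ S y := by
  ext i
  simp only [sparseFrontEnd, Pi.add_apply, mul_add, sum_add_distrib]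

theorem sum_mul_sparseFrontEnd_comm (w z : ι → ℝ) :
    ∑ i, w i * sparseFrontEnd Ψ S z i = ∑ i, z i * sparseFrontEnd Ψ S w i := by
  simp only [sparseFrontEnd, mul_sum]
  rw [sum_comm]
  conv_rhs => rw [sum_comm]
  refine sum_congr rfl fun k _ => ?_
  rw [sum_comm]
  exact sum_congr rfl fun m _ => sum_congr rfl fun i _ => by ring

theorem sum_mul_sparseFrontEnd_add (w x e : ι → ℝ) :
    ∑ i, w i * sparseFrontEnd Ψ S (x + e) i
      = ∑ i, w i * sparseFrontEnd Ψ S x i + ∑ i, e i * sparseFrontEnd Ψ S w i := by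
  simp only [sparseFrontEnd_add, Pi.add_apply, mul_add, sum_add_distrib,
    sum_mul_sparseFrontEnd_comm Ψ S w e]

end SparseFrontEnd

theorem stmt13_general (N : ℕ) (Ψ : Matrix (Fin N) (Fin N) ℝ)
    (S : Finset (Fin N)) (w x : Fin N → ℝ) (b ε : ℝ) (hε : 0 < ε)
    (f : (Fin N → ℝ) → (Fin N → ℝ))
    (hf : ∀ z, f z = fun i => ∑ k ∈ S, Ψ i k * (∑ m, Ψ m k * z m))
    (Pw : Fin N → ℝ)
    (hPw : Pw = fun i => ∑ k ∈ S, Ψ i k * (∑ m, Ψ m k * w m)) :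
    ((ε * ∑ i, |Pw i| < |∑ i, w i * f x i - b|) →
      ∀ e : Fin N → ℝ, (∀ i, |e i| ≤ ε) →
        Real.sign (∑ i, w i * f (x + e) i - b)
          = Real.sign (∑ i, w i * f x i - b)) ∧
    ((∑ i, |Pw i| < ∑ i, |w i|) → ε * ∑ i, |Pw i| < ε * ∑ i, |w i|) := by
  obtain rfl : f = sparseFrontEnd Ψ S := funext hf
  obtain rfl : Pw = sparseFrontEnd Ψ S w := hPw
  refine ⟨fun hmargin e he => ?_, fun h => mul_lt_mul_of_pos_left h hε⟩
  have hdistortion := abs_sum_mul_le_of_abs_le he (sparseFrontEnd Ψ S w)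
  rw [sum_mul_sparseFrontEnd_add, add_sub_right_comm]
  exact Real.sign_add_of_abs_lt (hdistortion.trans_lt hmargin)

/-- with a sparsifying front end of stable support `S`, the
defended classifier's decision is unchanged by any `‖e‖_∞ ≤ ε` whenever
`|wᵀ f(x) − b| > ε‖P_S w‖₁`; moreover if `‖P_S w‖₁ < ‖w‖₁` the certified
threshold strictly improves. -/
theorem stmt13 (N : ℕ) (Ψ : Matrix (Fin N) (Fin N) ℝ) (hΨ : Ψᵀ * Ψ = 1)
    (S : Finset (Fin N)) (w x : Fin N → ℝ) (b ε : ℝ) (hε : 0 < ε)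
    (f : (Fin N → ℝ) → (Fin N → ℝ))
    (hf : ∀ z, f z = fun i => ∑ k ∈ S, Ψ i k * (∑ m, Ψ m k * z m))
    (Pw : Fin N → ℝ)
    (hPw : Pw = fun i => ∑ k ∈ S, Ψ i k * (∑ m, Ψ m k * w m)) :
    ((ε * ∑ i, |Pw i| < |∑ i, w i * f x i - b|) →
      ∀ e : Fin N → ℝ, (∀ i, |e i| ≤ ε) →
        Real.sign (∑ i, w i * f (x + e) i - b)
          = Real.sign (∑ i, w i * f x i - b)) ∧
    ((∑ i, |Pw i| < ∑ i, |w i|) → ε * ∑ i, |Pw i| < ε * ∑ i, |w i|) :=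
  stmt13_general N Ψ S w x b ε hε f hf Pw hPw
end

section
/- Suppose c = Ψᵀx has exactly K nonzero entries with minimum magnitude λ, and let e satisfy ‖e‖_∞ ≤ ε with λ > 2εM, M = max_j ‖ψ_j‖₁. Then the reconstruction error of the front end obeys ‖ΨH_K(Ψᵀ(x+e)) − x‖₂ ≤ √K · εM. -/
open Finset Matrix

/-!
Write `Ψᵀ(x + e) = c + n` with `n = Ψᵀe`. Each noise coefficient satisfies
`|n k| ≤ ε M`, so on the support of `c` the observed coefficients exceed `λ - εM > εM`, while
off it they are at most `εM`; hence the `K` largest ones sit exactly on the support of `c`.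
The error after keeping them is `Ψ` applied to `n` restricted to that support, and `Ψ` is an
isometry, so the error is the Euclidean norm of at most `K` entries each bounded by `εM`.
-/

theorem abs_transpose_mulVec_apply_le {m n : Type*} [Fintype m] (Ψ : Matrix m n ℝ)
    {M ε : ℝ} (hM : ∀ j, ∑ i, |Ψ i j| ≤ M) (hε : 0 ≤ ε) {e : m → ℝ}
    (he : ∀ i, |e i| ≤ ε) (j : n) : |(Ψᵀ *ᵥ e) j| ≤ ε * M :=
  calc |(Ψᵀ *ᵥ e) j| = |∑ i, Ψ i j * e i| := rfl
    _ ≤ ∑ i, |Ψ i j| * |e i| := (abs_sum_le_sum_abs _ _).trans_eq (by simp only [abs_mul])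
    _ ≤ ∑ i, |Ψ i j| * ε := by gcongr with i; exact he i
    _ = (∑ i, |Ψ i j|) * ε := (sum_mul ..).symm
    _ ≤ M * ε := by gcongr; exact hM j
    _ = ε * M := mul_comm _ _

theorem sum_sq_mulVec_of_transpose_mul_self {m n : Type*} [Fintype m] [Fintype n]
    [DecidableEq n] {Ψ : Matrix m n ℝ} (hΨ : Ψᵀ * Ψ = 1) (v : n → ℝ) :
    ∑ i, (Ψ *ᵥ v) i ^ 2 = ∑ k, v k ^ 2 := by
  have hdot : Ψ *ᵥ v ⬝ᵥ Ψ *ᵥ v = v ⬝ᵥ v := by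
    rw [dotProduct_mulVec, ← mulVec_transpose, mulVec_mulVec, hΨ, one_mulVec]
  simpa only [dotProduct, sq] using hdot

theorem mem_of_ne_zero_of_largest {ι : Type*} [Fintype ι] {c d : ι → ℝ} {lam δ : ℝ}
    (hlam : ∀ j, c j ≠ 0 → lam ≤ |c j|) (hδ : ∀ k, |d k - c k| ≤ δ) (hSNR : 2 * δ < lam)
    {S : Finset ι} (hcard : (Function.support c).ncard = #S)
    (htop : ∀ j ∈ S, ∀ i ∉ S, |d i| ≤ |d j|) {j : ι} (hj : c j ≠ 0) : j ∈ S := by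
  by_contra hjS
  set T := (Set.toFinite (Function.support c)).toFinset
  have hnot : ¬ S ⊆ T := fun hST =>
    hjS (eq_of_subset_of_card_le hST (by rw [← Set.ncard_eq_toFinset_card, hcard]) ▸
      (Set.Finite.mem_toFinset _).mpr hj)
  obtain ⟨i, hiS, hiT⟩ := not_subset.mp hnot
  have hci : c i = 0 := by simpa [T] using hiT
  have hdi : |d i| ≤ δ := by simpa [hci] using hδ i
  have hdj : lam - δ ≤ |d j| := by
    linarith [hlam j hj, hδ j, abs_sub_abs_le_abs_sub (c j) (d j), abs_sub_comm (c j) (d j)]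
  linarith [htop i hiS j hjS]

theorem sqrt_sum_sq_le_sqrt_card_mul {ι : Type*} (S : Finset ι) {f : ι → ℝ} {B : ℝ}
    (hf : ∀ k ∈ S, |f k| ≤ B) : √(∑ k ∈ S, f k ^ 2) ≤ √(#S : ℝ) * B := by
  rcases S.eq_empty_or_nonempty with rfl | ⟨k₀, hk₀⟩
  · simp
  have hB : 0 ≤ B := (abs_nonneg _).trans (hf k₀ hk₀)
  have hsum : ∑ k ∈ S, f k ^ 2 ≤ #S * B ^ 2 := by
    simpa using sum_le_sum fun k hk => sq_le_sq' (abs_le.mp (hf k hk)).1 (abs_le.mp (hf k hk)).2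
  calc √(∑ k ∈ S, f k ^ 2) ≤ √(#S * B ^ 2) := Real.sqrt_le_sqrt hsum
    _ = √(#S : ℝ) * B := by rw [Real.sqrt_mul (Nat.cast_nonneg _), Real.sqrt_sq hB]

/-- if `c = Ψᵀx` has exactly `K` nonzeros of minimum magnitude
`λ > 2εM` and `‖e‖_∞ ≤ ε`, then the front-end reconstruction error obeys
`‖Ψ H_K(Ψᵀ(x+e)) − x‖₂ ≤ √K · εM`. -/
theorem stmt18 (N K : ℕ) (Ψ : Matrix (Fin N) (Fin N) ℝ) (hΨ : Ψᵀ * Ψ = 1)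
    (x : Fin N → ℝ) (c : Fin N → ℝ) (hc : c = Ψᵀ.mulVec x)
    (hsupp : Set.ncard {j | c j ≠ 0} = K)
    (lam M ε : ℝ) (hε : 0 < ε)
    (hlam : ∀ j, c j ≠ 0 → lam ≤ |c j|)
    (hM : ∀ j, ∑ i, |Ψ i j| ≤ M)
    (hSNR : 2 * ε * M < lam)
    (e : Fin N → ℝ) (he : ∀ i, |e i| ≤ ε)
    (S : Finset (Fin N)) (hK : S.card = K)
    (htop : ∀ j ∈ S, ∀ i ∉ S, |Ψᵀ.mulVec (x + e) i| ≤ |Ψᵀ.mulVec (x + e) j|) :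
    Real.sqrt (∑ i,
        (Ψ.mulVec (fun k => if k ∈ S then Ψᵀ.mulVec (x + e) k else 0) i - x i) ^ 2)
      ≤ Real.sqrt K * (ε * M) := by
  have hnoise := abs_transpose_mulVec_apply_le Ψ hM hε.le he
  have hdc : Ψᵀ *ᵥ (x + e) = c + Ψᵀ *ᵥ e := by rw [mulVec_add, hc]
  have hsub : ∀ j, c j ≠ 0 → j ∈ S :=
    fun j => mem_of_ne_zero_of_largest hlam (fun k => by simpa [hdc] using hnoise k)
      (by linarith) (hsupp.trans hK.symm) htop
  have hx : x = Ψ *ᵥ c := by rw [hc, mulVec_mulVec, mul_eq_one_comm.mp hΨ, one_mulVec]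
  have herr : (Ψ *ᵥ fun k => if k ∈ S then (Ψᵀ *ᵥ (x + e)) k else 0) - x
      = Ψ *ᵥ fun k => if k ∈ S then (Ψᵀ *ᵥ e) k else 0 := by
    rw [hdc, hx, ← mulVec_sub]
    congr 1
    ext k
    by_cases hk : k ∈ S
    · simp [hk]
    · simp [hk, not_imp_comm.mp (hsub k) hk]
  calc √(∑ i, ((Ψ *ᵥ fun k => if k ∈ S then (Ψᵀ *ᵥ (x + e)) k else 0) i - x i) ^ 2)
      = √(∑ k, (if k ∈ S then (Ψᵀ *ᵥ e) k else 0) ^ 2) := by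
        simp only [← Pi.sub_apply, herr, sum_sq_mulVec_of_transpose_mul_self hΨ]
    _ = √(∑ k ∈ S, (Ψᵀ *ᵥ e) k ^ 2) := by simp [ite_pow, sum_ite_mem]
    _ ≤ √K * (ε * M) := hK ▸ sqrt_sum_sq_le_sqrt_card_mul S fun k _ => hnoise k
end
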